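/- Let 0 < α < 1. There exists a constant c_α depending only on α such that for all integers 0 ≤ k < l, every x ∈ I_{l+1}(e_k + e_l), and every n ∈ ℕ_+, A_n^α |K_n^α(x)| ≤ c_α 2^{αl + k}. -/

import Mathlib

open MeasureTheory Filter Finset
open scoped ENNReal NNReal

noncomputable section

/-- The dyadic group `G = ∏ Z₂`. -/
abbrev G : Type := ℕ → ZMod 2

instance : TopologicalSpace (ZMod 2) := ⊥
instance : DiscreteTopology (ZMod 2) := ⟨rfl⟩
instance : MeasurableSpace (ZMod 2) := ⊤
instance : BorelSpace (ZMod 2) := ⟨borel_eq_top_of_discrete.symm⟩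
instance : ContinuousAdd (ZMod 2) := ⟨continuous_of_discreteTopology⟩
instance : ContinuousNeg (ZMod 2) := ⟨continuous_of_discreteTopology⟩
instance : IsTopologicalAddGroup (ZMod 2) := ⟨⟩

/-- The normalized Haar measure `μ` on the dyadic group `G`. -/
def μG : Measure G := Measure.addHaarMeasure ⊤

/-- The Rademacher functions `r_k(x) = (-1)^{x_k}`. -/
def rad (k : ℕ) (x : G) : ℝ := (-1 : ℝ) ^ (x k).val

/-- The Walsh functions `w_n = ∏_k r_k^{n_k}`, where `n = ∑ n_k 2^k`. -/
def walsh (n : ℕ) (x : G) : ℝ := ∏ k ∈ Finset.range n, rad k x ^ (Nat.testBit n k).toNat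

/-- The Dirichlet kernels `D_n = ∑_{k=0}^{n-1} w_k`. -/
def dirichlet (n : ℕ) (x : G) : ℝ := ∑ k ∈ Finset.range n, walsh k x

/-- The Fejér kernels `K_n = (1/n) ∑_{k=1}^{n} D_k`. -/
def fejer (n : ℕ) (x : G) : ℝ := (n : ℝ)⁻¹ * ∑ k ∈ Finset.Icc 1 n, dirichlet k x

/-- The Cesàro numbers `A_n^α = ((α+1)⋯(α+n))/n!`. -/
def cesA (α : ℝ) (n : ℕ) : ℝ := (∏ i ∈ Finset.range n, (α + i + 1)) / n.factorial

/-- The `(C,α)` kernels `K_n^α = (1/A_n^α) ∑_{k=1}^n A_{n-k}^{α-1} D_k`. -/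
def cesKernel (α : ℝ) (n : ℕ) (x : G) : ℝ :=
  (cesA α n)⁻¹ * ∑ k ∈ Finset.Icc 1 n, cesA (α - 1) (n - k) * dirichlet k x

/-- Walsh–Fourier coefficients of an integrable function. -/
def walshCoeff (f : G → ℝ) (k : ℕ) : ℝ := ∫ x, f x * walsh k x ∂μG

/-- Partial sums `S_m f` of the Walsh–Fourier series. -/
def partialSum (f : G → ℝ) (m : ℕ) (x : G) : ℝ :=
  ∑ k ∈ Finset.range m, walshCoeff f k * walsh k x

/-- The `(C,α)` means `σ_n^α f = (1/A_n^α) ∑_{k=1}^n A_{n-k}^{α-1} S_k f`. -/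
def cesaroMean (α : ℝ) (f : G → ℝ) (n : ℕ) (x : G) : ℝ :=
  (cesA α n)⁻¹ * ∑ k ∈ Finset.Icc 1 n, cesA (α - 1) (n - k) * partialSum f k x

/-- The dyadic interval `I_n(x)`. -/
def dyadicI (n : ℕ) (x : G) : Set G := {y | ∀ i < n, y i = x i}

/-- `e_k ∈ G`: the element whose `k`-th coordinate is `1` and all others `0`. -/
def eG (k : ℕ) : G := fun i => if i = k then 1 else 0

/-- The projection onto the first `n` coordinates. -/
def projG (n : ℕ) : G → (Fin n → ZMod 2) := fun x i => x i

/-- The dyadic filtration `ℱ_n`, generated by the dyadic intervals of length `n`. -/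
def dyadicF : Filtration ℕ (inferInstance : MeasurableSpace G) where
  seq n := MeasurableSpace.comap (projG n) inferInstance
  mono' := by
    intro n m hnm
    have h : projG n = (fun (y : Fin m → ZMod 2) (i : Fin n) => y (Fin.castLE hnm i)) ∘ projG m :=
      rfl
    simp only []
    rw [h, ← MeasurableSpace.comap_comp]
    exact MeasurableSpace.comap_mono
      ((measurable_pi_lambda _ fun i => measurable_pi_apply _).comap_le)
  le' := fun n => (measurable_pi_lambda _ fun i => measurable_pi_apply _).comap_le

/-- The Walsh–Fourier coefficients `F̂(k) = lim_n ∫ F_n w_k dμ` of a martingale. -/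
def martCoeff (F : ℕ → G → ℝ) (k : ℕ) : ℝ :=
  limUnder atTop (fun n => ∫ x, F n x * walsh k x ∂μG)

/-- Partial sums `S_m F` of the Walsh–Fourier series of a martingale. -/
def martSum (F : ℕ → G → ℝ) (m : ℕ) (x : G) : ℝ :=
  ∑ k ∈ Finset.range m, martCoeff F k * walsh k x

/-- The `(C,α)` means of a martingale. -/
def martCesaro (α : ℝ) (F : ℕ → G → ℝ) (n : ℕ) (x : G) : ℝ :=
  (cesA α n)⁻¹ * ∑ k ∈ Finset.Icc 1 n, cesA (α - 1) (n - k) * martSum F k x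

/-- The `L_p(G)` quasi-norm `(∫ |f|^p dμ)^{1/p}`, valued in `ℝ≥0∞`. -/
def LpNormG (p : ℝ) (f : G → ℝ) : ℝ≥0∞ :=
  (∫⁻ x, ENNReal.ofReal |f x| ^ p ∂μG) ^ (1 / p)

/-- The Hardy space quasi-norm `‖F‖_{H_p} = ‖sup_n |F_n|‖_p` of a martingale. -/
def hardyNorm (p : ℝ) (F : ℕ → G → ℝ) : ℝ≥0∞ :=
  (∫⁻ x, (⨆ n, ENNReal.ofReal |F n x|) ^ p ∂μG) ^ (1 / p)

/-- The Hardy quasi-norm of an integrable function, via its generated martingale `(E_n f)`. -/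
def hardyFnNorm (p : ℝ) (f : G → ℝ) : ℝ≥0∞ :=
  hardyNorm p (fun n => μG[f | dyadicF n])


/-!
For `x ∈ I_{l+1}(e_k + e_l)` the coordinate `x_k = 1` kills `D_{2^s}(x) = ∏_{i<s} (1 + r_i(x))`
for every `s > k`, hence `D_{2^s q + r}(x) = w_{2^s q}(x) D_r(x)` for `r ≤ 2^s`. This gives
`|D_m(x)| ≤ 2^{k+1}` and, since also `x_l = 1`, `D_{m + 2^l}(x) = -D_m(x)` whenever
`m mod 2^{l+1} < 2^l`. In generating-function form the latter says
`∑ D_m(x) t^m = (1 - t^{2^l}) C(t)` with coefficients of `C` bounded by `2^{k+1}`, so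
`A_n^α K_n^α(x)`, the `n`-th coefficient of `(∑ A_j^{α-1} t^j)(∑ D_m(x) t^m)`, is at most
`2^{k+1}` times the `ℓ¹` norm of the coefficients of `(1 - t^{2^l}) ∑ A_j^{α-1} t^j`.
As `A^{α-1}` is positive and decreasing, that norm is at most
`2 ∑_{j<2^l} A_j^{α-1} ≤ 2 A_{2^l}^α ≤ 2 e^α 2^{αl}`,
the last step by `1 + α/i ≤ e^{α/i}` and `H_N ≤ 1 + log N`.
-/

section CesaroNumbers

variable {α : ℝ}

lemma cesA_zero : cesA α 0 = 1 := by simp [cesA]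

lemma cesA_succ (n : ℕ) : cesA α (n + 1) = cesA α n * ((α + n + 1) / (n + 1)) := by
  rw [cesA, cesA, prod_range_succ, Nat.factorial_succ, Nat.cast_mul, div_mul_div_comm]
  push_cast
  rw [mul_comm ((n : ℝ) + 1)]

lemma cesA_pos (hα : -1 < α) (n : ℕ) : 0 < cesA α n := by
  induction n with
  | zero => simp [cesA_zero]
  | succ n ih =>
    rw [cesA_succ]
    have : 0 < α + n + 1 := by linarith [(n.cast_nonneg : (0 : ℝ) ≤ n)]
    positivity

lemma cesA_sub_one_succ (n : ℕ) : cesA (α - 1) (n + 1) = cesA α n * (α / (n + 1)) := by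
  rw [cesA, cesA, Nat.factorial_succ, Nat.cast_mul, prod_range_succ', div_mul_div_comm]
  push_cast
  ring_nf

lemma cesA_succ_eq_add (n : ℕ) : cesA α (n + 1) = cesA α n + cesA (α - 1) (n + 1) := by
  rw [cesA_succ, cesA_sub_one_succ]
  field_simp
  ring

lemma sum_range_cesA_sub_one (n : ℕ) : ∑ j ∈ range (n + 1), cesA (α - 1) j = cesA α n := by
  induction n with
  | zero => simp [cesA]
  | succ n ih => rw [sum_range_succ, ih, ← cesA_succ_eq_add]

lemma cesA_sub_one_antitone (hα0 : 0 < α) (hα1 : α ≤ 1) : Antitone (cesA (α - 1)) := by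
  refine antitone_nat_of_succ_le fun n => ?_
  rw [cesA_succ]
  have hratio : (α - 1 + n + 1) / (n + 1) ≤ 1 := by
    rw [div_le_one (by positivity)]
    linarith
  exact mul_le_of_le_one_right (cesA_pos (by linarith) n).le hratio

lemma cesA_le_exp_mul_harmonic (hα : 0 ≤ α) (n : ℕ) :
    cesA α n ≤ Real.exp (α * harmonic n) := by
  induction n with
  | zero => simp [cesA_zero]
  | succ n ih =>
    have hfactor : (α + n + 1) / (n + 1) ≤ Real.exp (α * (↑(n + 1) : ℝ)⁻¹) := by
      have h := Real.add_one_le_exp (α * (↑(n + 1) : ℝ)⁻¹)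
      convert h using 1
      push_cast
      field_simp
      ring
    rw [cesA_succ, harmonic_succ]
    push_cast
    rw [mul_add, Real.exp_add]
    exact mul_le_mul ih (by exact_mod_cast hfactor) (by positivity) (by positivity)

lemma cesA_le_exp_mul_one_add_log (hα : 0 ≤ α) (n : ℕ) :
    cesA α n ≤ Real.exp (α * (1 + Real.log n)) :=
  (cesA_le_exp_mul_harmonic hα n).trans <|
    Real.exp_le_exp.mpr (mul_le_mul_of_nonneg_left (harmonic_le_one_add_log n) hα)

end CesaroNumbers

section AntiperiodicConvolution

open PowerSeries

lemma add_mod_two_mul_lt_iff {L : ℕ} (hL : 0 < L) (m : ℕ) :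
    (m + L) % (2 * L) < L ↔ L ≤ m % (2 * L) := by
  have hlt : m % (2 * L) < 2 * L := Nat.mod_lt _ (by omega)
  rw [Nat.add_mod, Nat.mod_eq_of_lt (show L < 2 * L by omega)]
  by_cases h : m % (2 * L) + L < 2 * L
  · rw [Nat.mod_eq_of_lt h]
    omega
  · rw [Nat.mod_eq_sub_mod (by omega), Nat.mod_eq_of_lt (by omega)]
    omega

lemma sum_range_sub_shift_le {a : ℕ → ℝ} (ha : ∀ j, 0 ≤ a j) (L M : ℕ) :
    ∑ j ∈ range M, (a j - a (j + L)) ≤ ∑ j ∈ range L, a j := by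
  have h₁ := sum_range_add a M L
  have h₂ := sum_range_add a L M
  have h₃ : 0 ≤ ∑ i ∈ range L, a (M + i) := sum_nonneg fun i _ => ha _
  simp only [sum_sub_distrib, add_comm _ L]
  rw [add_comm M L] at h₁
  linarith

lemma sum_range_abs_coeff_one_sub_X_pow_mul_le {a : ℕ → ℝ} (ha : ∀ j, 0 ≤ a j)
    (hanti : Antitone a) (L N : ℕ) :
    ∑ i ∈ range N, |coeff i ((1 - X ^ L) * PowerSeries.mk a)| ≤
      2 * ∑ j ∈ range L, a j := by
  have hcoeff : ∀ i,
      coeff i ((1 - X ^ L) * PowerSeries.mk a) = a i - if L ≤ i then a (i - L) else 0 := by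
    intro i
    rw [sub_mul, one_mul, map_sub, coeff_X_pow_mul', coeff_mk]
    split_ifs <;> simp
  calc ∑ i ∈ range N, |coeff i ((1 - X ^ L) * PowerSeries.mk a)|
      ≤ ∑ i ∈ range (L + N), |coeff i ((1 - X ^ L) * PowerSeries.mk a)| :=
        sum_le_sum_of_subset_of_nonneg (range_subset_range.mpr (by omega))
          fun _ _ _ => abs_nonneg _
    _ = ∑ j ∈ range L, a j + ∑ j ∈ range N, (a j - a (j + L)) := by
        rw [sum_range_add]
        congr 1 <;> refine sum_congr rfl fun i hi => ?_
        · rw [hcoeff, if_neg (by simpa using hi), sub_zero, abs_of_nonneg (ha i)]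
        · rw [hcoeff, if_pos (by omega), Nat.add_sub_cancel_left, abs_sub_comm,
            abs_of_nonneg (sub_nonneg.mpr (hanti (by omega))), add_comm L i]
    _ ≤ 2 * ∑ j ∈ range L, a j := by linarith [sum_range_sub_shift_le ha L N]

lemma abs_coeff_mul_le {φ ψ : ℝ⟦X⟧} {D : ℝ} (hψ : ∀ j, |coeff j ψ| ≤ D) (n : ℕ) :
    |coeff n (φ * ψ)| ≤ (∑ i ∈ range (n + 1), |coeff i φ|) * D := by
  rw [coeff_mul, Nat.sum_antidiagonal_eq_sum_range_succ_mk, sum_mul]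
  refine (abs_sum_le_sum_abs _ _).trans (sum_le_sum fun i _ => ?_)
  rw [abs_mul]
  exact mul_le_mul_of_nonneg_left (hψ _) (abs_nonneg _)

lemma mk_eq_one_sub_X_pow_mul_of_antiperiodic {d : ℕ → ℝ} {L : ℕ} (hL : 0 < L)
    (hflip : ∀ m, m % (2 * L) < L → d (m + L) = -d m) :
    PowerSeries.mk d =
      (1 - X ^ L) * PowerSeries.mk fun m => if m % (2 * L) < L then d m else 0 := by
  ext m
  rw [sub_mul, one_mul, map_sub, coeff_X_pow_mul', coeff_mk, coeff_mk]
  by_cases hm : L ≤ m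
  · obtain ⟨m, rfl⟩ : ∃ m', m = m' + L := ⟨m - L, by omega⟩
    rw [if_pos hm, Nat.add_sub_cancel, coeff_mk]
    simp only [add_mod_two_mul_lt_iff hL]
    by_cases h : m % (2 * L) < L
    · rw [if_neg (by omega), if_pos h, hflip m h]
      ring
    · rw [if_pos (by omega), if_neg h, sub_zero]
  · rw [if_neg hm, if_pos (by rw [Nat.mod_eq_of_lt (by omega)]; omega), sub_zero]

lemma abs_sum_mul_antiperiodic_le {a d : ℕ → ℝ} {D : ℝ} {L : ℕ} (hL : 0 < L)
    (ha : ∀ j, 0 ≤ a j) (hanti : Antitone a) (hd : ∀ m, |d m| ≤ D)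
    (hflip : ∀ m, m % (2 * L) < L → d (m + L) = -d m) (n : ℕ) :
    |∑ m ∈ range (n + 1), a (n - m) * d m| ≤ 2 * (∑ j ∈ range L, a j) * D := by
  set c : ℕ → ℝ := fun m => if m % (2 * L) < L then d m else 0
  have hc : ∀ m, |coeff m (PowerSeries.mk c)| ≤ D := by
    intro m
    rw [coeff_mk]
    simp only [c]
    split_ifs
    · exact hd m
    · simpa using (abs_nonneg _).trans (hd 0)
  have hsum : ∑ m ∈ range (n + 1), a (n - m) * d m =
      coeff n ((1 - X ^ L) * PowerSeries.mk a * PowerSeries.mk c) := by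
    rw [mul_comm (1 - X ^ L), mul_assoc, ← mk_eq_one_sub_X_pow_mul_of_antiperiodic hL hflip,
      mul_comm, coeff_mul, Nat.sum_antidiagonal_eq_sum_range_succ_mk]
    simp only [coeff_mk]
    exact sum_congr rfl fun m _ => mul_comm _ _
  rw [hsum]
  exact (abs_coeff_mul_le hc n).trans <| mul_le_mul_of_nonneg_right
    (sum_range_abs_coeff_one_sub_X_pow_mul_le ha hanti L _) ((abs_nonneg _).trans (hd 0))

end AntiperiodicConvolution

section Walsh

variable (x : G)

lemma abs_rad (j : ℕ) : |rad j x| = 1 := by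
  rw [rad, abs_pow, abs_neg, abs_one, one_pow]

lemma abs_walsh (m : ℕ) : |walsh m x| = 1 := by
  rw [walsh, abs_prod]
  exact prod_eq_one fun i _ => by rw [abs_pow, abs_rad, one_pow]

lemma abs_dirichlet_le (m : ℕ) : |dirichlet m x| ≤ m := by
  rw [dirichlet]
  refine (abs_sum_le_sum_abs _ _).trans_eq ?_
  simp [abs_walsh]

lemma walsh_eq_prod_range {m t : ℕ} (h : m ≤ t) :
    walsh m x = ∏ i ∈ range t, rad i x ^ (Nat.testBit m i).toNat := by
  refine prod_subset (range_subset_range.mpr h) fun i _ hi => ?_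
  rw [Nat.testBit_lt_two_pow ((Nat.lt_two_pow_self).trans_le
    (Nat.pow_le_pow_right two_pos (by simpa using hi)))]
  simp

lemma walsh_two_pow (s : ℕ) : walsh (2 ^ s) x = rad s x := by
  rw [walsh, prod_eq_single s (fun i _ hi => by simp [Nat.testBit_two_pow_of_ne (Ne.symm hi)])
    (fun hs => absurd (mem_range.mpr Nat.lt_two_pow_self) hs), Nat.testBit_two_pow_self]
  simp

lemma walsh_two_pow_mul_add {s j : ℕ} (q : ℕ) (hj : j < 2 ^ s) :
    walsh (2 ^ s * q + j) x = walsh (2 ^ s * q) x * walsh j x := by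
  rw [walsh_eq_prod_range x le_rfl, walsh_eq_prod_range x (Nat.le_add_right _ j),
    walsh_eq_prod_range x (Nat.le_add_left j _), ← prod_mul_distrib]
  refine prod_congr rfl fun i _ => ?_
  have hbit := Nat.testBit_two_pow_mul_add q hj i
  have hbit₀ := Nat.testBit_two_pow_mul_add q (Nat.two_pow_pos s) i
  rw [add_zero] at hbit₀
  split_ifs at hbit hbit₀ with hi
  · simp [hbit, hbit₀]
  · rw [hbit, hbit₀, Nat.testBit_lt_two_pow (hj.trans_le (Nat.pow_le_pow_right two_pos
      (by omega)))]
    simp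

lemma dirichlet_two_pow_mul_add {s r : ℕ} (q : ℕ) (hr : r ≤ 2 ^ s) :
    dirichlet (2 ^ s * q + r) x =
      dirichlet (2 ^ s * q) x + walsh (2 ^ s * q) x * dirichlet r x := by
  simp only [dirichlet, sum_range_add, mul_sum]
  exact congrArg _ (sum_congr rfl fun i hi =>
    walsh_two_pow_mul_add x q ((mem_range.mp hi).trans_le hr))

lemma dirichlet_two_pow (s : ℕ) : dirichlet (2 ^ s) x = ∏ i ∈ range s, (1 + rad i x) := by
  induction s with
  | zero => simp [dirichlet, walsh]
  | succ s ih =>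
    have h := dirichlet_two_pow_mul_add x 1 (le_refl (2 ^ s))
    rw [mul_one, ← two_mul, ← pow_succ', walsh_two_pow] at h
    rw [h, ih, prod_range_succ]
    ring

variable {x}

lemma dirichlet_two_pow_mul_eq_zero {s : ℕ} (hs : dirichlet (2 ^ s) x = 0) (q : ℕ) :
    dirichlet (2 ^ s * q) x = 0 := by
  induction q with
  | zero => simp [dirichlet]
  | succ q ih => rw [mul_add_one, dirichlet_two_pow_mul_add x q le_rfl, ih, hs, mul_zero, add_zero]

lemma dirichlet_two_pow_mul_add_of_eq_zero {s r : ℕ} (hs : dirichlet (2 ^ s) x = 0) (q : ℕ)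
    (hr : r ≤ 2 ^ s) : dirichlet (2 ^ s * q + r) x = walsh (2 ^ s * q) x * dirichlet r x := by
  rw [dirichlet_two_pow_mul_add x q hr, dirichlet_two_pow_mul_eq_zero hs, zero_add]

lemma rad_eq_neg_one {k : ℕ} (hk : x k = 1) : rad k x = -1 := by
  rw [rad, hk, show (1 : ZMod 2).val = 1 from rfl, pow_one]

lemma dirichlet_two_pow_eq_zero {k s : ℕ} (hk : x k = 1) (hks : k < s) :
    dirichlet (2 ^ s) x = 0 := by
  rw [dirichlet_two_pow]
  refine prod_eq_zero (mem_range.mpr hks) ?_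
  rw [rad_eq_neg_one hk, add_neg_cancel]

lemma abs_dirichlet_le_two_pow {k : ℕ} (hk : x k = 1) (m : ℕ) :
    |dirichlet m x| ≤ 2 ^ (k + 1) := by
  rw [← Nat.div_add_mod m (2 ^ (k + 1)), dirichlet_two_pow_mul_add_of_eq_zero
    (dirichlet_two_pow_eq_zero hk (Nat.lt_succ_self k)) _ (Nat.mod_lt _ (by positivity)).le,
    abs_mul, abs_walsh, one_mul]
  exact (abs_dirichlet_le x _).trans
    (by exact_mod_cast (Nat.mod_lt _ (by positivity)).le)

lemma dirichlet_add_two_pow {k l : ℕ} (hkl : k < l) (hk : x k = 1) (hl : x l = 1) {m : ℕ}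
    (hm : m % 2 ^ (l + 1) < 2 ^ l) : dirichlet (m + 2 ^ l) x = -dirichlet m x := by
  obtain ⟨q, r, hr, rfl⟩ : ∃ q r, r < 2 ^ l ∧ m = 2 ^ (l + 1) * q + r :=
    ⟨_, _, hm, (Nat.div_add_mod m _).symm⟩
  have hzero := dirichlet_two_pow_eq_zero hk (hkl.trans (Nat.lt_succ_self l))
  have hflip : dirichlet (2 ^ l + r) x = -dirichlet r x := by
    rw [← mul_one (2 ^ l), dirichlet_two_pow_mul_add x 1 hr.le, mul_one, walsh_two_pow,
      dirichlet_two_pow_eq_zero hk hkl, rad_eq_neg_one hl, zero_add, neg_one_mul]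
  have hr' : r < 2 ^ (l + 1) := hr.trans (Nat.pow_lt_pow_succ one_lt_two)
  rw [add_assoc, add_comm r, dirichlet_two_pow_mul_add_of_eq_zero hzero _ (by rw [pow_succ]; omega),
    hflip, dirichlet_two_pow_mul_add_of_eq_zero hzero _ hr'.le, mul_neg]

end Walsh

lemma sum_Icc_one_eq_sum_range_succ {M : Type*} [AddCommMonoid M] {f : ℕ → M} (hf : f 0 = 0)
    (n : ℕ) : ∑ m ∈ Icc 1 n, f m = ∑ m ∈ range (n + 1), f m := by
  rw [range_eq_Ico, sum_eq_sum_Ico_succ_bot (Nat.succ_pos n), hf, zero_add, zero_add,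
    Nat.succ_eq_add_one, Ico_add_one_right_eq_Icc]

lemma cesA_mul_abs_cesKernel {α : ℝ} (hα : -1 < α) (n : ℕ) (x : G) :
    cesA α n * |cesKernel α n x| =
      |∑ m ∈ range (n + 1), cesA (α - 1) (n - m) * dirichlet m x| := by
  rw [cesKernel, abs_mul, abs_inv, abs_of_pos (cesA_pos hα n), mul_inv_cancel_left₀
    (cesA_pos hα n).ne', sum_Icc_one_eq_sum_range_succ (by simp [dirichlet])]

lemma sum_range_two_pow_cesA_sub_one_le {α : ℝ} (hα : 0 < α) (l : ℕ) :
    ∑ j ∈ range (2 ^ l), cesA (α - 1) j ≤ Real.exp α * (2 : ℝ) ^ (α * l) := by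
  calc ∑ j ∈ range (2 ^ l), cesA (α - 1) j
      ≤ ∑ j ∈ range (2 ^ l + 1), cesA (α - 1) j :=
        sum_le_sum_of_subset_of_nonneg (range_subset_range.mpr (Nat.le_succ _))
          fun j _ _ => (cesA_pos (by linarith) j).le
    _ = cesA α (2 ^ l) := sum_range_cesA_sub_one _
    _ ≤ Real.exp (α * (1 + Real.log (2 ^ l : ℕ))) := cesA_le_exp_mul_one_add_log hα.le _
    _ = Real.exp α * (2 : ℝ) ^ (α * l) := by
        rw [Real.rpow_def_of_pos two_pos, ← Real.exp_add]
        push_cast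
        rw [Real.log_pow]
        ring_nf

/-- `A_n^α |K_n^α(x)| ≤ c_α 2^{αl + k}` for `x ∈ I_{l+1}(e_k + e_l)`, `k < l`. -/
theorem statement8 (α : ℝ) (hα0 : 0 < α) (hα1 : α < 1) :
    ∃ c : ℝ, 0 < c ∧ ∀ k l : ℕ, k < l → ∀ x ∈ dyadicI (l + 1) (eG k + eG l), ∀ n : ℕ, 1 ≤ n →
      cesA α n * |cesKernel α n x| ≤ c * (2 : ℝ) ^ (α * (l : ℝ)) * 2 ^ k := by
  refine ⟨4 * Real.exp α, by positivity, fun k l hkl x hx n _ => ?_⟩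
  have hk : x k = 1 := by simpa [eG, hkl.ne] using hx k (by omega)
  have hl : x l = 1 := by simpa [eG, hkl.ne'] using hx l (by omega)
  rw [cesA_mul_abs_cesKernel (by linarith)]
  calc _ ≤ 2 * (∑ j ∈ range (2 ^ l), cesA (α - 1) j) * 2 ^ (k + 1) :=
        abs_sum_mul_antiperiodic_le (Nat.two_pow_pos l) (fun j => (cesA_pos (by linarith) j).le)
          (cesA_sub_one_antitone hα0 hα1.le) (abs_dirichlet_le_two_pow hk)
          (fun m hm => dirichlet_add_two_pow hkl hk hl (by rwa [pow_succ'])) n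
    _ ≤ 2 * (Real.exp α * (2 : ℝ) ^ (α * l)) * 2 ^ (k + 1) := by
        gcongr
        exact sum_range_two_pow_cesA_sub_one_le hα0 l
    _ = 4 * Real.exp α * (2 : ℝ) ^ (α * l) * 2 ^ k := by ring

end
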